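/- arXiv:math/0306393 — 7 statements merged into one kernel-verified Lean document; each statement's English description precedes it below -/
import Mathlib

section
/- The ring of invariants C[X^{±1}, P^{±1}]^{Z_2}, where Z_2 acts by inverting both X and P, is generated by the elements I_1 = X + X^{-1}, I_2 = P + P^{-1}, I_3 = XP + X^{-1}P^{-1}, and these satisfy the relation I_1 I_2 I_3 = I_1^2 + I_2^2 + I_3^2 - 4. -/
open AddMonoidAlgebra

/-- The Laurent polynomial ring `ℂ[X^{±1}, P^{±1}]`, realized as the group algebra
of `ℤ × ℤ` over `ℂ`. -/
abbrev LaurentTwo : Type := AddMonoidAlgebra ℂ (ℤ × ℤ)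

/-- The generator of the `ℤ/2`-action: the algebra automorphism sending
`X ↦ X⁻¹`, `P ↦ P⁻¹`, induced by negation on the lattice `ℤ × ℤ`. -/
noncomputable def invAction : LaurentTwo ≃ₐ[ℂ] LaurentTwo :=
  AddMonoidAlgebra.domCongr ℂ ℂ (AddEquiv.neg (ℤ × ℤ))

/-!
Write `s v = x^v + x^{-v}` for `v ∈ ℤ²`. An invariant `f = ∑ f_v x^v` satisfies
`2 f = f + f(x⁻¹) = ∑ f_v s v`, so the invariants are spanned by the `s v`. These obey
`s g * s x = s (x + g) + s (x - g)`, so along a line `h + ℤ g` all `s` lie in a subalgebra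
once two consecutive ones do. Starting from `s 0 = 2`, `I₁ = s (1, 0)`, `I₂ = s (0, 1)` and
`I₃ = s (1, 1)`, this reaches the rows `(a, 0)` and `(a, 1)`, and then every column.
The relation is Fricke's trace identity `tr A tr B tr AB = tr² A + tr² B + tr² AB - 4`,
which holds for `s v`, `s w`, `s (v + w)` in any group algebra.
-/

namespace AddMonoidAlgebra

variable {R G : Type*} [CommRing R] [AddCommGroup G]

noncomputable def symSingle (v : G) : R[G] := single v 1 + single (-v) 1

theorem symSingle_neg (v : G) : (symSingle (-v) : R[G]) = symSingle v := by
  rw [symSingle, symSingle, neg_neg, add_comm]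

theorem symSingle_zero : (symSingle 0 : R[G]) = 2 := by
  rw [symSingle, neg_zero, ← one_def, one_add_one_eq_two]

theorem symSingle_mul_symSingle (v w : G) :
    (symSingle v * symSingle w : R[G]) = symSingle (v + w) + symSingle (v - w) := by
  simp only [symSingle, add_mul, mul_add, single_mul_single, one_mul]
  rw [neg_add, neg_sub, sub_eq_add_neg, neg_add_eq_sub]
  abel

theorem domCongr_neg_symSingle (v : G) :
    domCongr R R (AddEquiv.neg G) (symSingle v) = symSingle v := by
  rw [symSingle, map_add, domCongr_single, domCongr_single, AddEquiv.neg_apply,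
    AddEquiv.neg_apply, neg_neg, add_comm]

theorem symSingle_mul_symSingle_mul_symSingle_add (v w : G) :
    (symSingle v * symSingle w * symSingle (v + w) : R[G]) =
      symSingle v ^ 2 + symSingle w ^ 2 + symSingle (v + w) ^ 2 - 4 := by
  have h4 : (4 : R[G]) = 2 * symSingle 0 := by rw [symSingle_zero]; norm_num
  simp only [sq, h4, add_mul, symSingle_mul_symSingle, sub_self]
  rw [show v - w + (v + w) = v + v by abel, show v - w - (v + w) = -(w + w) by abel,
    symSingle_neg]
  ring

theorem symSingle_add_zsmul_mem {A : Subalgebra R R[G]} {g h : G}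
    (hg : symSingle g ∈ A) (hh : symSingle h ∈ A) (hhg : symSingle (h + g) ∈ A) (n : ℤ) :
    symSingle (h + n • g) ∈ A := by
  have recurrence {x : G} (hx : symSingle x ∈ A) :
      symSingle (x + g) ∈ A ↔ symSingle (x - g) ∈ A := by
    have hsum := A.mul_mem hx hg
    rw [symSingle_mul_symSingle] at hsum
    exact ⟨fun h ↦ by simpa using A.sub_mem hsum h, fun h ↦ by simpa using A.sub_mem hsum h⟩
  suffices symSingle (h + n • g) ∈ A ∧ symSingle (h + (n + 1) • g) ∈ A from this.1
  induction n using Int.induction_on with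
  | zero => simpa using ⟨hh, hhg⟩
  | succ n ih =>
    refine ⟨ih.2, ?_⟩
    rw [add_smul, one_smul, ← add_assoc, recurrence ih.2]
    simpa only [add_smul, one_smul, ← add_assoc, add_sub_cancel_right] using ih.1
  | pred n ih =>
    refine ⟨?_, by simpa using ih.1⟩
    rw [sub_smul, one_smul, ← add_sub_assoc, ← recurrence ih.1]
    simpa [add_smul, add_assoc] using ih.2

theorem mem_of_domCongr_neg_eq_self (h2 : IsUnit (2 : R)) {A : Subalgebra R R[G]}
    (hA : ∀ v, symSingle v ∈ A) {f : R[G]} (hf : domCongr R R (AddEquiv.neg G) f = f) :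
    f ∈ A := by
  have two_smul_eq : (2 : R) • f = f.coeff.sum fun v a ↦ a • symSingle v := by
    calc (2 : R) • f = f + domCongr R R (AddEquiv.neg G) f := by rw [hf, two_smul]
      _ = _ := by
        conv_lhs => rw [← sum_coeff_single f]
        rw [map_finsuppSum, ← Finsupp.sum_add]
        simp [symSingle]
  have hf_eq : f = (↑h2.unit⁻¹ : R) • (2 : R) • f := by
    rw [smul_smul, IsUnit.val_inv_mul, one_smul]
  rw [hf_eq, two_smul_eq]
  exact A.smul_mem (A.sum_mem fun v _ ↦ A.smul_mem (hA v) _) _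

end AddMonoidAlgebra

theorem symSingle_mem_of_generators {R : Type*} [CommRing R] {A : Subalgebra R R[ℤ × ℤ]}
    (h₁₀ : symSingle (1, 0) ∈ A) (h₀₁ : symSingle (0, 1) ∈ A) (h₁₁ : symSingle (1, 1) ∈ A)
    (v : ℤ × ℤ) : symSingle v ∈ A := by
  have h₀₀ : symSingle (0 : ℤ × ℤ) ∈ A := by
    rw [symSingle_zero]; exact ofNat_mem A 2
  have row₀ (a : ℤ) : symSingle (a, 0) ∈ A := by
    simpa using symSingle_add_zsmul_mem h₁₀ h₀₀ (by simpa using h₁₀) a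
  have row₁ (a : ℤ) : symSingle (a, 1) ∈ A := by
    simpa using symSingle_add_zsmul_mem h₁₀ h₀₁ (by simpa using h₁₁) a
  obtain ⟨a, b⟩ := v
  simpa using symSingle_add_zsmul_mem h₀₁ (row₀ a) (by simpa using row₁ a) b

/-- The ring of invariants `ℂ[X^{±1},P^{±1}]^{ℤ/2}` (for the action
inverting both `X` and `P`) is generated as a `ℂ`-algebra by
`I₁ = X + X⁻¹`, `I₂ = P + P⁻¹`, `I₃ = XP + X⁻¹P⁻¹`, and these satisfy
`I₁I₂I₃ = I₁² + I₂² + I₃² - 4`. -/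
theorem invariants_generators_and_relation
    (I₁ I₂ I₃ : LaurentTwo)
    (hI₁ : I₁ = AddMonoidAlgebra.single ((1 : ℤ), (0 : ℤ)) (1 : ℂ)
      + AddMonoidAlgebra.single ((-1 : ℤ), (0 : ℤ)) (1 : ℂ))
    (hI₂ : I₂ = AddMonoidAlgebra.single ((0 : ℤ), (1 : ℤ)) (1 : ℂ)
      + AddMonoidAlgebra.single ((0 : ℤ), (-1 : ℤ)) (1 : ℂ))
    (hI₃ : I₃ = AddMonoidAlgebra.single ((1 : ℤ), (1 : ℤ)) (1 : ℂ)
      + AddMonoidAlgebra.single ((-1 : ℤ), (-1 : ℤ)) (1 : ℂ)) :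
    (Algebra.adjoin ℂ {I₁, I₂, I₃} : Set LaurentTwo) = {f | invAction f = f} ∧
    I₁ * I₂ * I₃ = I₁ ^ 2 + I₂ ^ 2 + I₃ ^ 2 - 4 := by
  obtain rfl : I₁ = symSingle (1, 0) := hI₁
  obtain rfl : I₂ = symSingle (0, 1) := hI₂
  obtain rfl : I₃ = symSingle (1, 1) := hI₃
  refine ⟨Set.Subset.antisymm ?_ fun f hf ↦ ?_, symSingle_mul_symSingle_mul_symSingle_add _ _⟩
  · refine fun f hf ↦ (AlgHom.mem_equalizer invAction.toAlgHom (AlgHom.id ℂ _) f).1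
      (Algebra.adjoin_le ?_ hf)
    rintro _ (rfl | rfl | rfl) <;> exact domCongr_neg_symSingle _
  · refine mem_of_domCongr_neg_eq_self (IsUnit.mk0 2 two_ne_zero) (fun v ↦ ?_) hf
    exact symSingle_mem_of_generators (Algebra.subset_adjoin (by simp))
      (Algebra.subset_adjoin (by simp)) (Algebra.subset_adjoin (by simp)) v
end

section
/- The map from (C^*)^2 to the affine cubic surface {(x1,x2,x3) in C^3 : x1 x2 x3 = x1^2 + x2^2 + x3^2 - 4} given by (z1, z2) ↦ (z1 + z1^{-1}, z2 + z2^{-1}, z1 z2 + z1^{-1} z2^{-1}) is surjective, and two points have the same image if and only if they are related by the inversion (z1, z2) ↦ (z1^{-1}, z2^{-1}). -/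
/-!
The trace `u + u⁻¹` determines `u` up to inversion, being a root of `t² - (u + u⁻¹) t + 1`, and
over an algebraically closed field every value is a trace. Once `x₁ = u + u⁻¹` and
`x₂ = v + v⁻¹` are fixed, the cubic equation becomes the quadratic
`(x₃ - (uv + u⁻¹v⁻¹)) (x₃ - (uv⁻¹ + u⁻¹v)) = 0`, whose roots are the third coordinates of the
images of `(u, v)` and `(u, v⁻¹)`; this gives surjectivity. For the fibres, the first two
coordinates leave four candidates `(u^±1, v^±1)`, and the two mixed ones have the right third
coordinate only when `(u - u⁻¹)(v - v⁻¹) = 0`, in which case they equal `(u, v)` or `(u⁻¹, v⁻¹)`.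
-/

section

variable {R : Type*} [CommRing R] [IsDomain R]

theorem Units.val_add_val_inv_eq_iff (u v : Rˣ) :
    (u : R) + ((u⁻¹ : Rˣ) : R) = v + ((v⁻¹ : Rˣ) : R) ↔ v = u ∨ v = u⁻¹ := by
  have factor : ((v : R) - u) * (v - ((u⁻¹ : Rˣ) : R)) =
      v * ((v + ((v⁻¹ : Rˣ) : R)) - (u + ((u⁻¹ : Rˣ) : R))) := by
    linear_combination u.mul_inv - v.mul_inv
  rw [eq_comm, ← sub_eq_zero, ← mul_eq_zero_iff_left v.ne_zero, ← factor, mul_eq_zero,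
    sub_eq_zero, sub_eq_zero, Units.val_inj, Units.val_inj]

theorem Units.mul_add_inv_mul_inv_eq_iff (u v : Rˣ) :
    (u : R) * v + ((u⁻¹ : Rˣ) : R) * ((v⁻¹ : Rˣ) : R) =
        u * ((v⁻¹ : Rˣ) : R) + ((u⁻¹ : Rˣ) : R) * v ↔ u = u⁻¹ ∨ v = v⁻¹ := by
  have factor : (u : R) * v + ((u⁻¹ : Rˣ) : R) * ((v⁻¹ : Rˣ) : R) -
      (u * ((v⁻¹ : Rˣ) : R) + ((u⁻¹ : Rˣ) : R) * v) =
      ((u : R) - ((u⁻¹ : Rˣ) : R)) * ((v : R) - ((v⁻¹ : Rˣ) : R)) := by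
    ring
  rw [← sub_eq_zero, factor, mul_eq_zero, sub_eq_zero, sub_eq_zero, Units.val_inj,
    Units.val_inj]

theorem Units.cubic_relation_iff (u v : Rˣ) (t : R) :
    ((u : R) + ((u⁻¹ : Rˣ) : R)) * (v + ((v⁻¹ : Rˣ) : R)) * t =
        ((u : R) + ((u⁻¹ : Rˣ) : R)) ^ 2 + (v + ((v⁻¹ : Rˣ) : R)) ^ 2 + t ^ 2 - 4 ↔
      t = u * v + ((u⁻¹ : Rˣ) : R) * ((v⁻¹ : Rˣ) : R) ∨
        t = u * ((v⁻¹ : Rˣ) : R) + ((u⁻¹ : Rˣ) : R) * v := by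
  have factor : (t - (u * v + ((u⁻¹ : Rˣ) : R) * ((v⁻¹ : Rˣ) : R))) *
        (t - (u * ((v⁻¹ : Rˣ) : R) + ((u⁻¹ : Rˣ) : R) * v)) =
      ((u : R) + ((u⁻¹ : Rˣ) : R)) ^ 2 + (v + ((v⁻¹ : Rˣ) : R)) ^ 2 + t ^ 2 - 4 -
        ((u : R) + ((u⁻¹ : Rˣ) : R)) * (v + ((v⁻¹ : Rˣ) : R)) * t := by
    linear_combination ((u : R) ^ 2 + ((u⁻¹ : Rˣ) : R) ^ 2 - 2) * v.mul_inv +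
      ((v : R) ^ 2 + ((v⁻¹ : Rˣ) : R) ^ 2 - 2) * u.mul_inv
  rw [eq_comm, ← sub_eq_zero, ← factor, mul_eq_zero, sub_eq_zero, sub_eq_zero]

end

open Polynomial in
theorem exists_unit_add_inv_eq {K : Type*} [Field K] [IsAlgClosed K] (x : K) :
    ∃ u : Kˣ, (u : K) + ((u⁻¹ : Kˣ) : K) = x := by
  obtain ⟨u, hu⟩ := IsAlgClosed.exists_root (C 1 * X ^ 2 + C (-x) * X + C 1)
    (by rw [degree_quadratic one_ne_zero]; decide)
  have hu : u ^ 2 - x * u + 1 = 0 := by simpa [IsRoot, sub_eq_add_neg] using hu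
  have hu0 : u ≠ 0 := by rintro rfl; simp at hu
  refine ⟨Units.mk0 u hu0, ?_⟩
  simp only [Units.val_inv_eq_inv_val, Units.val_mk0]
  field_simp
  linear_combination hu

section

variable {R : Type*} [CommRing R]

def torusToCubic (z : Rˣ × Rˣ) : R × R × R :=
  ((z.1 : R) + ((z.1⁻¹ : Rˣ) : R), (z.2 : R) + ((z.2⁻¹ : Rˣ) : R),
    (z.1 : R) * z.2 + ((z.1⁻¹ : Rˣ) : R) * ((z.2⁻¹ : Rˣ) : R))

theorem torusToCubic_inv (z : Rˣ × Rˣ) : torusToCubic z⁻¹ = torusToCubic z := by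
  simp only [torusToCubic, Prod.fst_inv, Prod.snd_inv, inv_inv, add_comm]

theorem torusToCubic_eq_iff [IsDomain R] (z w : Rˣ × Rˣ) :
    torusToCubic z = torusToCubic w ↔ w = z ∨ w = z⁻¹ := by
  refine ⟨fun h ↦ ?_, ?_⟩
  · obtain ⟨u, v⟩ := z
    obtain ⟨a, b⟩ := w
    simp only [torusToCubic, Prod.mk.injEq] at h
    obtain ⟨h₁, h₂, h₃⟩ := h
    simp only [Prod.inv_mk, Prod.mk.injEq]
    rcases (Units.val_add_val_inv_eq_iff u a).1 h₁ with rfl | rfl <;>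
      rcases (Units.val_add_val_inv_eq_iff v b).1 h₂ with rfl | rfl
    · exact .inl ⟨rfl, rfl⟩
    · rw [inv_inv] at h₃
      rcases (Units.mul_add_inv_mul_inv_eq_iff _ _).1 h₃ with h | h
      · exact .inr ⟨h, rfl⟩
      · exact .inl ⟨rfl, h.symm⟩
    · rw [inv_inv] at h₃
      rcases (Units.mul_add_inv_mul_inv_eq_iff _ _).1 (h₃.trans (add_comm _ _)) with h | h
      · exact .inl ⟨h.symm, rfl⟩
      · exact .inr ⟨rfl, h⟩
    · exact .inr ⟨rfl, rfl⟩
  · rintro (rfl | rfl)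
    · rfl
    · exact (torusToCubic_inv z).symm

end

theorem exists_torusToCubic_eq {K : Type*} [Field K] [IsAlgClosed K] {x₁ x₂ x₃ : K}
    (h : x₁ * x₂ * x₃ = x₁ ^ 2 + x₂ ^ 2 + x₃ ^ 2 - 4) :
    ∃ z : Kˣ × Kˣ, torusToCubic z = (x₁, x₂, x₃) := by
  obtain ⟨u, rfl⟩ := exists_unit_add_inv_eq x₁
  obtain ⟨v, rfl⟩ := exists_unit_add_inv_eq x₂
  rcases (Units.cubic_relation_iff u v x₃).1 h with rfl | rfl
  · exact ⟨(u, v), rfl⟩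
  · exact ⟨(u, v⁻¹), by simp only [torusToCubic, inv_inv, add_comm]⟩

/-- The map `(z₁, z₂) ↦ (z₁ + z₁⁻¹, z₂ + z₂⁻¹, z₁z₂ + z₁⁻¹z₂⁻¹)` from
`(ℂ*)²` to the affine cubic surface `x₁x₂x₃ = x₁² + x₂² + x₃² - 4` is surjective, and
two points have the same image iff they are related by inversion of both coordinates. -/
theorem torus_quotient_cubic
    (f : ℂˣ × ℂˣ → ℂ × ℂ × ℂ)
    (hf : ∀ z : ℂˣ × ℂˣ,
      f z = ((z.1 : ℂ) + (z.1⁻¹ : ℂˣ), (z.2 : ℂ) + (z.2⁻¹ : ℂˣ),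
        (z.1 : ℂ) * z.2 + ((z.1⁻¹ : ℂˣ) : ℂ) * (z.2⁻¹ : ℂˣ))) :
    (∀ x₁ x₂ x₃ : ℂ, x₁ * x₂ * x₃ = x₁ ^ 2 + x₂ ^ 2 + x₃ ^ 2 - 4 →
      ∃ z : ℂˣ × ℂˣ, f z = (x₁, x₂, x₃)) ∧
    (∀ z w : ℂˣ × ℂˣ, f z = f w ↔ (w = z ∨ w = (z.1⁻¹, z.2⁻¹))) := by
  obtain rfl : f = torusToCubic := funext hf
  exact ⟨fun _ _ _ ↦ exists_torusToCubic_eq, torusToCubic_eq_iff⟩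
end

section
/- For any parameters p_0, p_1, p_2, p_3 in C, the projective cubic surface obtained as the closure of {X_1 X_2 X_3 - X_1^2 - X_2^2 - X_3^2 + p_1 X_1 + p_2 X_2 + p_3 X_3 + p_0 + 4 = 0} in P^3 is smooth at every point of the plane at infinity {x_0 = 0}. -/
/-!
On the plane at infinity `x₀ = 0` only the top-degree part `x₁x₂x₃ - x₀(x₁² + x₂² + x₃²)`
contributes to the gradient, which there equals `(-(x₁² + x₂² + x₃²), x₂x₃, x₁x₃, x₁x₂)`.
If it vanishes, the pairwise products force two of `x₁, x₂, x₃` to be zero, and then the sum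
of squares forces the third to be zero too, so `x = 0`.
-/

open MvPolynomial

theorem eq_zero_of_mul_eq_zero_of_sq_add_sq_add_sq_eq_zero {R : Type*} [Semiring R]
    [NoZeroDivisors R] {a b c : R} (hbc : b * c = 0) (hac : a * c = 0) (hab : a * b = 0)
    (hsq : a ^ 2 + b ^ 2 + c ^ 2 = 0) : a = 0 ∧ b = 0 ∧ c = 0 := by
  rcases mul_eq_zero.1 hbc with hb | hc <;> rcases mul_eq_zero.1 hac with ha | hc' <;>
    rcases mul_eq_zero.1 hab with ha' | hb' <;> simp_all

theorem eval_pderiv_cubic_of_eq_zero {R : Type*} [CommRing R] (p₀ p₁ p₂ p₃ : R)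
    {F : MvPolynomial (Fin 4) R}
    (hF : F = X 1 * X 2 * X 3 - X 0 * (X 1 ^ 2 + X 2 ^ 2 + X 3 ^ 2)
      + X 0 ^ 2 * (C p₁ * X 1 + C p₂ * X 2 + C p₃ * X 3) + C (p₀ + 4) * X 0 ^ 3)
    {x : Fin 4 → R} (hx : x 0 = 0) :
    eval x (pderiv 0 F) = -(x 1 ^ 2 + x 2 ^ 2 + x 3 ^ 2) ∧ eval x (pderiv 1 F) = x 2 * x 3 ∧
      eval x (pderiv 2 F) = x 1 * x 3 ∧ eval x (pderiv 3 F) = x 1 * x 2 := by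
  subst hF
  refine ⟨?_, ?_, ?_, ?_⟩ <;> simp [hx] <;> ring

/-- For any parameters `p₀,p₁,p₂,p₃ ∈ ℂ`, the projective cubic surface
`{F = 0} ⊂ ℙ³`, where `F` is the homogenization of
`X₁X₂X₃ - X₁² - X₂² - X₃² + p₁X₁ + p₂X₂ + p₃X₃ + p₀ + 4`,
is smooth at every point of the plane at infinity `{x₀ = 0}`: the gradient of `F`
does not vanish at any nonzero `x` with `x₀ = 0` lying on the surface. -/
theorem smooth_at_infinity (p₀ p₁ p₂ p₃ : ℂ)
    (F : MvPolynomial (Fin 4) ℂ)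
    (hF : F = X 1 * X 2 * X 3 - X 0 * (X 1 ^ 2 + X 2 ^ 2 + X 3 ^ 2)
      + X 0 ^ 2 * (C p₁ * X 1 + C p₂ * X 2 + C p₃ * X 3) + C (p₀ + 4) * X 0 ^ 3) :
    ∀ x : Fin 4 → ℂ, x ≠ 0 → x 0 = 0 → eval x F = 0 →
      ∃ i : Fin 4, eval x (pderiv i F) ≠ 0 := by
  intro x hx h0 _
  by_contra! hgrad
  obtain ⟨hd₀, hd₁, hd₂, hd₃⟩ := eval_pderiv_cubic_of_eq_zero p₀ p₁ p₂ p₃ hF h0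
  obtain ⟨h₁, h₂, h₃⟩ := eq_zero_of_mul_eq_zero_of_sq_add_sq_add_sq_eq_zero
    (hd₁ ▸ hgrad 1) (hd₂ ▸ hgrad 2) (hd₃ ▸ hgrad 3) (neg_eq_zero.1 (hd₀ ▸ hgrad 0))
  exact hx (funext fun i => by fin_cases i <;> assumption)
end

section
/- The homogeneous cubic polynomial F = x_1 x_2 x_3 - x_0(x_1^2 + x_2^2 + x_3^2) + x_0^2(p_1 x_1 + p_2 x_2 + p_3 x_3) + (p_0+4) x_0^3 is irreducible in C[x_0, x_1, x_2, x_3] for any complex parameters p_0, p_1, p_2, p_3. -/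
/-!
Since `F` is a cubic, a nontrivial factorization has a factor `a + ∑ bᵢ xᵢ` of total degree one,
so `F` vanishes on the affine hyperplane `a + ∑ bᵢ xᵢ = 0`; this forces `b = 0`. For
`j = 1, 2, 3`, `F` restricted to a line in the `xⱼ`-direction is quadratic with leading
coefficient `-x₀`, so if `bⱼ = 0` the hyperplane lies in `{x₀ = 0}`, where `F = x₁x₂x₃`.
If `b₁ ≠ 0`, vanishing of `x₁x₂x₃` on the part of the hyperplane inside `{x₀ = 0}` forces
`b₂ = 0`, so the hyperplane lies in `{x₀ = 0}`, which `b₁ ≠ 0` rules out. Hence `b₁ = 0`; the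
hyperplane then lies in `{x₀ = 0}`, which likewise rules out `b₂ ≠ 0` and `b₃ ≠ 0` and leaves
the hyperplane `{x₀ = 0}`, on which `F` does not vanish.
-/

open MvPolynomial

namespace MvPolynomial

variable {σ K : Type*} [Field K]

theorem irreducible_of_totalDegree_le_three {p : MvPolynomial σ K} (h2 : 2 ≤ p.totalDegree)
    (h3 : p.totalDegree ≤ 3) (h1 : ∀ q, q ∣ p → q.totalDegree ≠ 1) : Irreducible p := by
  have isUnit_of_totalDegree_eq_zero {q : MvPolynomial σ K} (hq : q ≠ 0)
      (hq0 : q.totalDegree = 0) : IsUnit q := by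
    rw [totalDegree_eq_zero_iff_eq_C.mp hq0] at hq ⊢
    exact (Ne.isUnit (by simpa using hq)).map C
  refine ⟨fun hu => ?_, fun q r hqr => ?_⟩
  · have := (isUnit_iff_totalDegree_of_isReduced.mp hu).2
    omega
  · have hq : q ≠ 0 := by rintro rfl; simp_all
    have hr : r ≠ 0 := by rintro rfl; simp_all
    have hsum := totalDegree_mul_of_isDomain hq hr
    have hq1 := h1 q (hqr ▸ dvd_mul_right q r)
    have hr1 := h1 r (hqr ▸ dvd_mul_left r q)
    rw [← hqr] at hsum
    by_cases hq0 : q.totalDegree = 0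
    · exact .inl (isUnit_of_totalDegree_eq_zero hq hq0)
    · exact .inr (isUnit_of_totalDegree_eq_zero hr (by omega))

theorem eq_C_add_sum_C_mul_X_of_totalDegree_le_one {R : Type*} [CommSemiring R] [Fintype σ]
    [DecidableEq σ] {p : MvPolynomial σ R} (hp : p.totalDegree ≤ 1) :
    p = C (coeff 0 p) + ∑ i, C (coeff (Finsupp.single i 1) p) * X i := by
  ext m
  simp only [coeff_add, coeff_C, coeff_sum, coeff_C_mul, coeff_X]
  rcases Nat.lt_or_ge 1 m.degree with hm | hm
  · have h0 : (0 : σ →₀ ℕ) ≠ m := by rintro rfl; simp at hm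
    have h1 (i : σ) : Finsupp.single i 1 ≠ m := by rintro rfl; simp at hm
    simp [coeff_eq_zero_of_totalDegree_lt (hp.trans_lt hm), h0, h1]
  · rcases Nat.le_one_iff_eq_zero_or_eq_one.mp hm with hm | hm
    · obtain rfl : m = 0 := (Finsupp.degree_eq_zero_iff m).mp hm
      simp
    · obtain ⟨j, rfl⟩ := (Finsupp.sum_eq_one_iff m).mp hm
      have h0 : (0 : σ →₀ ℕ) ≠ Finsupp.single j 1 :=
        (Finsupp.single_ne_zero.mpr one_ne_zero).symm
      simp [Finsupp.single_left_inj, h0]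

variable [Fintype σ]

def VanishesOnHyperplane (f : MvPolynomial σ K) (a : K) (b : σ → K) : Prop :=
  ∀ x, a + ∑ i, b i * x i = 0 → eval x f = 0

theorem vanishesOnHyperplane_of_dvd [DecidableEq σ] {f g : MvPolynomial σ K}
    (hg : g.totalDegree ≤ 1) (hgf : g ∣ f) :
    VanishesOnHyperplane f (coeff 0 g) fun i => coeff (Finsupp.single i 1) g := by
  intro x hx
  have hgx : eval x g = 0 := by
    rw [eq_C_add_sum_C_mul_X_of_totalDegree_le_one hg]
    simpa using hx
  exact zero_dvd_iff.mp (hgx ▸ map_dvd (eval x) hgf)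

end MvPolynomial

theorem exists_add_sum_mul_eq_zero_and_apply_ne_zero {ι K : Type*} [Fintype ι] [DecidableEq ι]
    [Field K] (a : K) {b : ι → K} {j k : ι} (hkj : k ≠ j) (hbk : b k ≠ 0) :
    ∃ x : ι → K, a + ∑ i, b i * x i = 0 ∧ x j ≠ 0 := by
  refine ⟨Pi.single j 1 + Pi.single k (-(a + b j) / b k), ?_, by simp [hkj.symm]⟩
  simp only [Pi.add_apply, Pi.single_apply, mul_add, mul_ite, mul_one, mul_zero,
    Finset.sum_add_distrib, Finset.sum_ite_eq', Finset.mem_univ, ↓reduceIte]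
  field_simp
  ring

section CubicForm

variable {K : Type*} [Field K] (p₀ p₁ p₂ p₃ : K)

noncomputable def cubicForm {R : Type*} [CommRing R] (p₀ p₁ p₂ p₃ : R) :
    MvPolynomial (Fin 4) R :=
  X 1 * X 2 * X 3 - X 0 * (X 1 ^ 2 + X 2 ^ 2 + X 3 ^ 2)
    + X 0 ^ 2 * (C p₁ * X 1 + C p₂ * X 2 + C p₃ * X 3) + C (p₀ + 4) * X 0 ^ 3

@[simp]
theorem eval_cubicForm (x : Fin 4 → K) :
    eval x (cubicForm p₀ p₁ p₂ p₃) = x 1 * x 2 * x 3 - x 0 * (x 1 ^ 2 + x 2 ^ 2 + x 3 ^ 2)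
      + x 0 ^ 2 * (p₁ * x 1 + p₂ * x 2 + p₃ * x 3) + (p₀ + 4) * x 0 ^ 3 := by
  simp [cubicForm]

theorem isHomogeneous_cubicForm : (cubicForm p₀ p₁ p₂ p₃).IsHomogeneous 3 :=
  (((((isHomogeneous_X K 1).mul (isHomogeneous_X K 2)).mul (isHomogeneous_X K 3)).sub
    ((isHomogeneous_X K 0).mul (((isHomogeneous_X_pow 1 2).add
      (isHomogeneous_X_pow 2 2)).add (isHomogeneous_X_pow 3 2)))).add
    ((isHomogeneous_X_pow 0 2).mul (((isHomogeneous_C_mul_X p₁ 1).add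
      (isHomogeneous_C_mul_X p₂ 2)).add (isHomogeneous_C_mul_X p₃ 3)))).add
    (isHomogeneous_C_mul_X_pow (p₀ + 4) 0 3)

theorem totalDegree_cubicForm : (cubicForm p₀ p₁ p₂ p₃).totalDegree = 3 :=
  (isHomogeneous_cubicForm p₀ p₁ p₂ p₃).totalDegree fun h => by
    simpa using congrArg (eval ![0, 1, 1, 1]) h

namespace MvPolynomial.VanishesOnHyperplane

variable {p₀ p₁ p₂ p₃} {a : K} {b : Fin 4 → K} [NeZero (2 : K)]

theorem apply_zero_eq_zero_of_cubicForm (hF : VanishesOnHyperplane (cubicForm p₀ p₁ p₂ p₃) a b)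
    {j : Fin 4} (hj : j ≠ 0) (hbj : b j = 0) {x : Fin 4 → K}
    (hx : a + ∑ i, b i * x i = 0) : x 0 = 0 := by
  have hshift (s : K) : a + ∑ i, b i * (x + Pi.single j s : Fin 4 → K) i = 0 := by
    simp [mul_add, Finset.sum_add_distrib, Pi.single_apply, hbj, hx]
  have hplus := hF _ (hshift 1)
  have hminus := hF _ (hshift (-1))
  have hx0 := hF x hx
  simp only [eval_cubicForm, Pi.add_apply] at hplus hminus hx0
  -- second difference in the direction `eⱼ`: twice the coefficient `-x₀` of `s²`
  have : 2 * x 0 = 0 := by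
    fin_cases j
    · exact absurd rfl hj
    all_goals
      simp only [Fin.reduceFinMk, Fin.mk_one, Fin.isValue, Pi.single_apply, Fin.reduceEq,
        ↓reduceIte, add_zero] at hplus hminus
      linear_combination -(hplus + hminus - 2 * hx0)
  exact (mul_eq_zero.mp this).resolve_left two_ne_zero

theorem normal_two_eq_zero_of_cubicForm (hF : VanishesOnHyperplane (cubicForm p₀ p₁ p₂ p₃) a b)
    (hb1 : b 1 ≠ 0) : b 2 = 0 := by
  obtain ⟨α, hα⟩ : ∃ α, b 1 * α = a := ⟨a / b 1, mul_div_cancel₀ a hb1⟩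
  have hline (u : K) :
      eval ![0, -(α + b 2 * u + b 3), b 1 * u, b 1] (cubicForm p₀ p₁ p₂ p₃) = 0 :=
    hF _ <| by
      simp only [Fin.sum_univ_four, Matrix.cons_val_zero, Matrix.cons_val_one,
        Matrix.cons_val_two, Matrix.cons_val_three, Matrix.head_cons, Matrix.tail_cons]
      linear_combination -hα
  have hplus := hline 1
  have hminus := hline (-1)
  simp only [eval_cubicForm, Matrix.cons_val_zero, Matrix.cons_val_one, Matrix.cons_val_two,
    Matrix.cons_val_three, Matrix.head_cons, Matrix.tail_cons] at hplus hminus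
  have : b 2 * (2 * b 1 ^ 2) = 0 := by linear_combination -(hplus + hminus)
  exact (mul_eq_zero.mp this).resolve_right (mul_ne_zero two_ne_zero (pow_ne_zero 2 hb1))

theorem normal_eq_zero_of_cubicForm (hF : VanishesOnHyperplane (cubicForm p₀ p₁ p₂ p₃) a b) :
    b = 0 := by
  have hb1 : b 1 = 0 := by
    by_contra hb1
    obtain ⟨x, hx, hx0⟩ := exists_add_sum_mul_eq_zero_and_apply_ne_zero a one_ne_zero hb1
    exact hx0 (hF.apply_zero_eq_zero_of_cubicForm (j := 2) (by decide)
      (hF.normal_two_eq_zero_of_cubicForm hb1) hx)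
  have hbk (k : Fin 4) (hk : k ≠ 0) : b k = 0 := by
    by_contra hbk
    obtain ⟨x, hx, hx0⟩ := exists_add_sum_mul_eq_zero_and_apply_ne_zero a hk hbk
    exact hx0 (hF.apply_zero_eq_zero_of_cubicForm one_ne_zero hb1 hx)
  have hb0 : b 0 = 0 := by
    by_contra hb0
    set x : Fin 4 → K := ![-(a / b 0), 1, 1, 1]
    have hx : a + ∑ i, b i * x i = 0 := by
      simp [x, Fin.sum_univ_four, hbk, mul_div_cancel₀ _ hb0]
    have hFx := hF x hx
    rw [eval_cubicForm, hF.apply_zero_eq_zero_of_cubicForm one_ne_zero hb1 hx] at hFx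
    simp [x] at hFx
  funext i
  fin_cases i <;> simp [hb0, hbk]

end MvPolynomial.VanishesOnHyperplane

end CubicForm

/-- The homogeneous cubic
`F = x₁x₂x₃ - x₀(x₁² + x₂² + x₃²) + x₀²(p₁x₁ + p₂x₂ + p₃x₃) + (p₀+4)x₀³`
is irreducible in `ℂ[x₀,x₁,x₂,x₃]` for any complex parameters `p₀,p₁,p₂,p₃`. -/
theorem homogeneous_cubic_irreducible (p₀ p₁ p₂ p₃ : ℂ)
    (F : MvPolynomial (Fin 4) ℂ)
    (hF : F = X 1 * X 2 * X 3 - X 0 * (X 1 ^ 2 + X 2 ^ 2 + X 3 ^ 2)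
      + X 0 ^ 2 * (C p₁ * X 1 + C p₂ * X 2 + C p₃ * X 3) + C (p₀ + 4) * X 0 ^ 3) :
    Irreducible F := by
  obtain rfl : F = cubicForm p₀ p₁ p₂ p₃ := hF
  have hdeg := totalDegree_cubicForm p₀ p₁ p₂ p₃
  refine irreducible_of_totalDegree_le_three (by omega) hdeg.le fun G hG hG1 => ?_
  have hlinear := (vanishesOnHyperplane_of_dvd hG1.le hG).normal_eq_zero_of_cubicForm
  rw [eq_C_add_sum_C_mul_X_of_totalDegree_le_one hG1.le] at hG1
  simp [congrFun hlinear] at hG1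
end

section
/- Let C' ⊂ C^3 be an irreducible affine cubic surface whose projective closure meets the plane at infinity in the triangle {x_0 = x_1 x_2 x_3 = 0}, and suppose all points at infinity of the closure are smooth points. Then after translating and rescaling the coordinates X_1, X_2, X_3, the equation of C' can be brought to the form X_1 X_2 X_3 = X_1^2 + X_2^2 + X_3^2 + b_1 X_1 + b_2 X_2 + b_3 X_3 + c for some constants b_1, b_2, b_3, c in C. -/
/-!
At the vertex `x = eᵢ` of the triangle at infinity every partial derivative of the projective
closure vanishes except `∂/∂x₀`, which equals `-aᵢᵢ`; so smoothness at infinity forces `aᵢᵢ ≠ 0`.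
Writing `aᵢᵢ = sᵢ²`, the substitution `Xᵢ = λᵢ Yᵢ + tᵢ` with `λ = (s₁s₂, s₀s₂, s₀s₁)` and
`tᵢ = aⱼₖ + aₖⱼ` (`{i, j, k} = {0, 1, 2}`) kills the mixed terms `YⱼYₖ` and gives the cubic term
and every square `Yᵢ²` the same coefficient `(s₀s₁s₂)²`; dividing by it yields the normal form.
-/

open MvPolynomial

section

variable {R : Type*} [CommRing R] (a : Fin 3 → Fin 3 → R) (b : Fin 3 → R) (c : R)

noncomputable def triangleCubic : MvPolynomial (Fin 3) R :=
  X 0 * X 1 * X 2 -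
    ((∑ i : Fin 3, ∑ j : Fin 3, C (a i j) * X i * X j) + (∑ k : Fin 3, C (b k) * X k) + C c)

noncomputable def triangleCubicClosure : MvPolynomial (Fin 4) R :=
  X 1 * X 2 * X 3 -
    (X 0 * (∑ i : Fin 3, ∑ j : Fin 3, C (a i j) * X i.succ * X j.succ) +
      X 0 ^ 2 * (∑ k : Fin 3, C (b k) * X k.succ) + C c * X 0 ^ 3)

theorem eval_vertex_triangleCubicClosure (i : Fin 3) :
    eval (Pi.single i.succ 1) (triangleCubicClosure a b c) = 0 := by
  fin_cases i <;> simp [triangleCubicClosure, Fin.sum_univ_three]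

theorem eval_vertex_pderiv_triangleCubicClosure_of_diag_eq_zero {i : Fin 3} (ha : a i i = 0)
    (k : Fin 4) : eval (Pi.single i.succ 1) (pderiv k (triangleCubicClosure a b c)) = 0 := by
  fin_cases i <;> simp only [Fin.zero_eta, Fin.mk_one, Fin.reduceFinMk] at ha <;>
    fin_cases k <;> simp [triangleCubicClosure, Fin.sum_univ_three, ha]

theorem diag_ne_zero_of_smooth_at_infinity [Nontrivial R]
    (hsmooth : ∀ x : Fin 4 → R, x ≠ 0 → x 0 = 0 → eval x (triangleCubicClosure a b c) = 0 →
      ∃ k : Fin 4, eval x (pderiv k (triangleCubicClosure a b c)) ≠ 0)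
    (i : Fin 3) : a i i ≠ 0 := by
  intro ha
  obtain ⟨k, hk⟩ := hsmooth (Pi.single i.succ 1) (Pi.single_ne_zero_iff.mpr one_ne_zero)
    (Pi.single_eq_of_ne (Fin.succ_ne_zero i).symm 1) (eval_vertex_triangleCubicClosure a b c i)
  exact hk (eval_vertex_pderiv_triangleCubicClosure_of_diag_eq_zero a b c ha k)

theorem aeval_rescale_translate_triangleCubic (s : Fin 3 → R) (hs : ∀ i, a i i = s i * s i) :
    ∃ (β : Fin 3 → R) (γ : R),
      aeval (fun i : Fin 3 => C (![s 1 * s 2, s 0 * s 2, s 0 * s 1] i) * X i +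
          C (![a 1 2 + a 2 1, a 0 2 + a 2 0, a 0 1 + a 1 0] i)) (triangleCubic a b c) =
        C ((s 0 * s 1 * s 2) ^ 2) * (X 0 * X 1 * X 2 - (X 0 ^ 2 + X 1 ^ 2 + X 2 ^ 2)) -
          ((∑ k : Fin 3, C (β k) * X k) + C γ) := by
  set t : Fin 3 → R := ![a 1 2 + a 2 1, a 0 2 + a 2 0, a 0 1 + a 1 0]
  set lam : Fin 3 → R := ![s 1 * s 2, s 0 * s 2, s 0 * s 1]
  -- the affine part is the first-order Taylor expansion of the cubic at `t`
  refine ⟨fun k => -(lam k * eval t (pderiv k (triangleCubic a b c))),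
    -eval t (triangleCubic a b c), ?_⟩
  simp only [triangleCubic, aeval_eq_bind₁, bind₁_X_right, algHom_C, algebraMap_eq,
    Fin.sum_univ_three, hs, map_add, map_sub, map_mul, map_zero, map_neg, C_pow,
    Derivation.leibniz, derivation_C, pderiv_X, Pi.single_apply, smul_eq_mul, eval_X, eval_C,
    Fin.isValue, Matrix.cons_val_zero, Matrix.cons_val_one, Matrix.cons_val, Fin.reduceEq,
    ↓reduceIte, one_ne_zero, zero_ne_one, mul_ite, mul_one, mul_zero, add_zero, zero_add, lam, t]
  ring

end

theorem C_mul_sub_sub_affine_eq {K σ : Type*} [Field K] [Fintype σ] {μ : K} (hμ : μ ≠ 0)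
    (P Q : MvPolynomial σ K) (β : σ → K) (γ : K) :
    C μ * (P - Q) - ((∑ k, C (β k) * X k) + C γ) =
      C μ * (P - (Q + (∑ k, C (β k / μ) * X k) + C (γ / μ))) := by
  simp only [mul_sub, mul_add, Finset.mul_sum, ← mul_assoc, ← map_mul, mul_div_cancel₀ _ hμ]
  ring

theorem cubic_with_triangle_normal_form_general
    (a : Fin 3 → Fin 3 → ℂ) (b : Fin 3 → ℂ) (c : ℂ)
    (R' : MvPolynomial (Fin 3) ℂ)
    (hR' : R' = X 0 * X 1 * X 2 -
      ((∑ i : Fin 3, ∑ j : Fin 3, C (a i j) * X i * X j) +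
        (∑ k : Fin 3, C (b k) * X k) + C c))
    (F' : MvPolynomial (Fin 4) ℂ)
    -- `F'` is the homogenization of `R'` with respect to `x₀`
    (hF' : F' = X 1 * X 2 * X 3 -
      (X 0 * (∑ i : Fin 3, ∑ j : Fin 3, C (a i j) * X i.succ * X j.succ) +
        X 0 ^ 2 * (∑ k : Fin 3, C (b k) * X k.succ) + C c * X 0 ^ 3))
    -- all points at infinity of the projective closure are smooth
    (hsmooth : ∀ x : Fin 4 → ℂ, x ≠ 0 → x 0 = 0 → eval x F' = 0 →
      ∃ i : Fin 4, eval x (pderiv i F') ≠ 0) :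
    ∃ (lam t b' : Fin 3 → ℂ) (c' μ : ℂ), (∀ i, lam i ≠ 0) ∧ μ ≠ 0 ∧
      aeval (fun i : Fin 3 => C (lam i) * X i + C (t i)) R' =
        C μ * (X 0 * X 1 * X 2 -
          (X 0 ^ 2 + X 1 ^ 2 + X 2 ^ 2 +
            (∑ k : Fin 3, C (b' k) * X k) + C c')) := by
  rw [show F' = triangleCubicClosure a b c from hF'] at hsmooth
  rw [show R' = triangleCubic a b c from hR']
  have hdiag := diag_ne_zero_of_smooth_at_infinity a b c hsmooth
  choose s hs using fun i => IsAlgClosed.exists_eq_mul_self (a i i)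
  have hs0 : ∀ i, s i ≠ 0 := fun i h => hdiag i (by simp [hs i, h])
  have hμ : (s 0 * s 1 * s 2) ^ 2 ≠ 0 := by simp [hs0]
  obtain ⟨β, γ, hsub⟩ := aeval_rescale_translate_triangleCubic a b c s hs
  refine ⟨_, _, fun k => β k / _, γ / _, _, ?_, hμ, hsub.trans (C_mul_sub_sub_affine_eq hμ _ _ β γ)⟩
  intro i
  fin_cases i <;> simp [hs0]

/-- Let `C' ⊂ ℂ³` be an irreducible affine cubic surface whose projective
closure meets the plane at infinity in the triangle `{x₀ = x₁x₂x₃ = 0}` — so its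
equation has the form `X₁X₂X₃ = Σ aᵢⱼ XᵢXⱼ + Σ bₖ Xₖ + c` — and suppose all points at
infinity of the closure are smooth.  Then after translating and rescaling the
coordinates, the equation can be brought to the form
`X₁X₂X₃ = X₁² + X₂² + X₃² + b₁X₁ + b₂X₂ + b₃X₃ + c`. -/
theorem cubic_with_triangle_normal_form
    (a : Fin 3 → Fin 3 → ℂ) (b : Fin 3 → ℂ) (c : ℂ)
    (R' : MvPolynomial (Fin 3) ℂ)
    (hR' : R' = X 0 * X 1 * X 2 -
      ((∑ i : Fin 3, ∑ j : Fin 3, C (a i j) * X i * X j) +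
        (∑ k : Fin 3, C (b k) * X k) + C c))
    (hirr : Irreducible R')
    (F' : MvPolynomial (Fin 4) ℂ)
    -- `F'` is the homogenization of `R'` with respect to `x₀`
    (hF' : F' = X 1 * X 2 * X 3 -
      (X 0 * (∑ i : Fin 3, ∑ j : Fin 3, C (a i j) * X i.succ * X j.succ) +
        X 0 ^ 2 * (∑ k : Fin 3, C (b k) * X k.succ) + C c * X 0 ^ 3))
    -- all points at infinity of the projective closure are smooth
    (hsmooth : ∀ x : Fin 4 → ℂ, x ≠ 0 → x 0 = 0 → eval x F' = 0 →
      ∃ i : Fin 4, eval x (pderiv i F') ≠ 0) :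
    ∃ (lam t b' : Fin 3 → ℂ) (c' μ : ℂ), (∀ i, lam i ≠ 0) ∧ μ ≠ 0 ∧
      aeval (fun i : Fin 3 => C (lam i) * X i + C (t i)) R' =
        C μ * (X 0 * X 1 * X 2 -
          (X 0 ^ 2 + X 1 ^ 2 + X 2 ^ 2 +
            (∑ k : Fin 3, C (b' k) * X k) + C c')) :=
  cubic_with_triangle_normal_form_general a b c R' hR' F' hF' hsmooth
end

section
/- The subgroup K of PGL(2, Z) consisting of classes of matrices in GL(2, Z) congruent to the identity modulo 2 is freely generated by the three involutions g_1 = [[1,0],[0,-1]], g_2 = [[1,2],[0,-1]], g_3 = [[1,0],[2,-1]]; that is, K is isomorphic to the free product Z/2 * Z/2 * Z/2 with these generators. -/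
open Matrix

/-- `GL(2, ℤ)`. -/
abbrev GLZ := GL (Fin 2) ℤ

/-- The subgroup `{±I}` of `GL(2, ℤ)`. -/
def pmOne : Subgroup GLZ := Subgroup.zpowers (-1 : GLZ)

instance pmOne_normal : pmOne.Normal := by
  constructor
  intro x hx g
  have hx' : x ∈ Subgroup.center GLZ := by
    have h1 : (-1 : GLZ) ∈ Subgroup.center GLZ := by
      rw [Subgroup.mem_center_iff]; intro g; rw [mul_neg_one, neg_one_mul]
    rcases Subgroup.mem_zpowers_iff.mp hx with ⟨k, hk⟩
    exact hk ▸ Subgroup.zpow_mem _ h1 k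
  have h2 : g * x * g⁻¹ = x := by
    rw [(Subgroup.mem_center_iff.mp hx') g]; group
  exact h2.symm ▸ hx

/-- `PGL(2, ℤ) = GL(2, ℤ)/{±I}`. -/
def PGLZ := GLZ ⧸ pmOne

noncomputable instance : Group PGLZ := by unfold PGLZ; infer_instance

/-- Reduction mod 2, `GL(2, ℤ) → GL(2, ℤ/2)`. -/
noncomputable def mod2Hom : GLZ →* GL (Fin 2) (ZMod 2) :=
  Units.map (RingHom.toMonoidHom (RingHom.mapMatrix (Int.castRingHom (ZMod 2))))

lemma mod2Hom_neg_one : mod2Hom (-1) = 1 := by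
  apply Units.ext
  show (Matrix.map (-1 : Matrix (Fin 2) (Fin 2) ℤ) (Int.cast : ℤ → ZMod 2)) = 1
  ext i j
  fin_cases i <;> fin_cases j <;> simp [Matrix.one_apply] <;> decide

/-- The mod-2 reduction `PGL(2, ℤ) → PGL(2, ℤ/2) = GL(2, ℤ/2)`. -/
noncomputable def mod2PGL : PGLZ →* GL (Fin 2) (ZMod 2) :=
  QuotientGroup.lift pmOne mod2Hom (by
    intro x hx
    rcases Subgroup.mem_zpowers_iff.mp hx with ⟨k, hk⟩
    rw [← hk, MonoidHom.mem_ker, map_zpow, mod2Hom_neg_one, _root_.one_zpow])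

/-- `K = ker(PGL(2,ℤ) → PGL(2,ℤ/2))`: the classes of matrices congruent to the
identity mod 2. -/
noncomputable def Kcongr : Subgroup PGLZ := mod2PGL.ker

/-- An involutive integer matrix gives an element of `GL(2, ℤ)`. -/
def mkInv (A : Matrix (Fin 2) (Fin 2) ℤ) (h : A * A = 1) : GLZ := ⟨A, A, h, h⟩

/-- The three involutions `g₁ = [[1,0],[0,-1]]`, `g₂ = [[1,2],[0,-1]]`,
`g₃ = [[1,0],[2,-1]]` as elements of `PGL(2, ℤ)`. -/
noncomputable def genK : Fin 3 → PGLZ :=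
  ![QuotientGroup.mk (mkInv !![1, 0; 0, -1] (by decide)),
    QuotientGroup.mk (mkInv !![1, 2; 0, -1] (by decide)),
    QuotientGroup.mk (mkInv !![1, 0; 2, -1] (by decide))]

/-!
Freeness is a ping-pong argument. On the slope `y / x` of a vector `(x, y) ∈ ℤ²`, `g₁`, `g₂`, `g₃`
act by `s ↦ -s`, `s ↦ -s / (1 + 2s)`, `s ↦ 2 - s`, and each maps the union of two of the cones
`(-∞, -1) ∪ (0, 1)`, `(-1, 0)`, `(1, ∞)` into the third. A nonempty reduced word therefore moves a
vector from the cone avoided by both of its ends into another cone, so it is not `±I`.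

Generation is a Euclidean algorithm: `g₁g₂ = [[1,2],[0,1]]`, `g₃g₁ = [[1,0],[2,1]]` and their
inverses shrink the first column `(odd, even)` of a matrix `≡ I mod 2` until it is `(±1, 0)`, and
such an upper triangular matrix is `±(g₁g₂)ᵏ` or `±(g₁g₂)ᵏg₁`.
-/

def genMatrix : Fin 3 → Matrix (Fin 2) (Fin 2) ℤ :=
  ![!![1, 0; 0, -1], !![1, 2; 0, -1], !![1, 0; 2, -1]]

lemma genMatrix_mul_self (i : Fin 3) : genMatrix i * genMatrix i = 1 := by
  fin_cases i <;> decide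

def genGL (i : Fin 3) : GLZ := mkInv (genMatrix i) (genMatrix_mul_self i)

noncomputable def toPGLZ : GLZ →* PGLZ := QuotientGroup.mk' pmOne

lemma toPGLZ_eq_one_iff {A : GLZ} : toPGLZ A = 1 ↔ A ∈ pmOne :=
  QuotientGroup.eq_one_iff A

lemma genK_eq : genK = toPGLZ ∘ genGL :=
  funext fun i => by fin_cases i <;> rfl

lemma mod2Hom_genGL (i : Fin 3) : mod2Hom (genGL i) = 1 := by
  ext : 1
  fin_cases i <;> decide

lemma genGL_mul_self (i : Fin 3) : genGL i * genGL i = 1 :=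
  Units.ext (genMatrix_mul_self i)

lemma mem_pmOne_iff {x : GLZ} : x ∈ pmOne ↔ x = 1 ∨ x = -1 := by
  refine ⟨fun hx => ?_, ?_⟩
  · obtain ⟨k, rfl⟩ := Subgroup.mem_zpowers_iff.mp hx
    rcases Int.even_or_odd k with hk | hk
    · exact .inl hk.neg_one_zpow
    · exact .inr hk.neg_one_zpow
  · rintro (rfl | rfl)
    exacts [one_mem _, Subgroup.mem_zpowers _]

/-- In terms of the slope `y / x` of `v = (x, y)`: `(-∞, -1) ∪ (0, 1)`, `(-1, 0)` and `(1, ∞)`. -/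
def pingPongSet : Fin 3 → Set (Fin 2 → ℤ) :=
  ![{v | v 0 * v 1 < 0 ∧ v 0 ^ 2 < v 1 ^ 2 ∨ 0 < v 0 * v 1 ∧ v 1 ^ 2 < v 0 ^ 2},
    {v | v 0 * v 1 < 0 ∧ v 1 ^ 2 < v 0 ^ 2},
    {v | 0 < v 0 * v 1 ∧ v 0 ^ 2 < v 1 ^ 2}]

lemma pingPongSet_disjoint {i j : Fin 3} (h : i ≠ j) :
    Disjoint (pingPongSet i) (pingPongSet j) := by
  rw [Set.disjoint_left]
  fin_cases i <;> fin_cases j <;> simp [pingPongSet] at h ⊢ <;> intro v <;> grind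

lemma neg_mem_pingPongSet {i : Fin 3} {v : Fin 2 → ℤ} (h : v ∈ pingPongSet i) :
    -v ∈ pingPongSet i := by
  fin_cases i <;> simpa [pingPongSet] using h

lemma pingPongSet_nonempty (i : Fin 3) : (pingPongSet i).Nonempty := by
  fin_cases i
  exacts [⟨![2, 1], by simp [pingPongSet]⟩, ⟨![-2, 1], by simp [pingPongSet]⟩,
    ⟨![1, 2], by simp [pingPongSet]⟩]

lemma genMatrix_mulVec_mem_pingPongSet {i j : Fin 3} (h : i ≠ j) {v : Fin 2 → ℤ}
    (hv : v ∈ pingPongSet j) : genMatrix i *ᵥ v ∈ pingPongSet i := by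
  fin_cases i <;> fin_cases j <;>
    simp_all [pingPongSet, genMatrix, dotProduct, Fin.sum_univ_two]
  · rcases hv with ⟨h₁, h₂⟩ | ⟨h₁, h₂⟩ <;> constructor <;> nlinarith
  · constructor <;> nlinarith
  · rcases hv with ⟨h₁, h₂⟩ | ⟨h₁, h₂⟩ <;> constructor <;> nlinarith
  · constructor <;> nlinarith

lemma prod_genGL_mulVec_mem_pingPongSet (i : Fin 3) (l : List (Fin 3))
    (hl : (i :: l).IsChain (· ≠ ·)) {j : Fin 3} (hj : j ≠ (i :: l).getLast (List.cons_ne_nil i l))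
    {v : Fin 2 → ℤ} (hv : v ∈ pingPongSet j) :
    ((i :: l).map genGL).prod.val *ᵥ v ∈ pingPongSet i := by
  induction l generalizing i with
  | nil =>
    rw [List.map_singleton, List.prod_singleton]
    exact genMatrix_mulVec_mem_pingPongSet (by simpa using hj.symm) hv
  | cons k l ih =>
    obtain ⟨hik, hl⟩ := List.isChain_cons_cons.mp hl
    rw [List.map_cons, List.prod_cons, Units.val_mul, ← Matrix.mulVec_mulVec]
    exact genMatrix_mulVec_mem_pingPongSet hik (ih k hl (by simpa using hj))

lemma prod_genGL_notMem_pmOne {l : List (Fin 3)} (hl : l.IsChain (· ≠ ·)) (hne : l ≠ []) :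
    (l.map genGL).prod ∉ pmOne := by
  obtain ⟨i, l, rfl⟩ := List.exists_cons_of_ne_nil hne
  obtain ⟨j, hji, hjl⟩ : ∃ j, j ≠ i ∧ j ≠ (i :: l).getLast (List.cons_ne_nil i l) := by
    generalize (i :: l).getLast _ = k
    fin_cases i <;> fin_cases k <;> decide
  obtain ⟨v, hv⟩ := pingPongSet_nonempty j
  have hw := prod_genGL_mulVec_mem_pingPongSet i l hl hjl hv
  rw [mem_pmOne_iff]
  rintro (h | h) <;> rw [h] at hw
  · rw [Units.val_one, Matrix.one_mulVec] at hw
    exact Set.disjoint_left.mp (pingPongSet_disjoint hji) hv hw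
  · rw [Units.val_neg, Units.val_one, Matrix.neg_mulVec, Matrix.one_mulVec] at hw
    exact Set.disjoint_left.mp (pingPongSet_disjoint hji) (neg_mem_pingPongSet hv) hw

lemma eq_nil_of_prod_genK_eq_one {l : List (Fin 3)} (hl : l.IsChain (· ≠ ·))
    (h : (l.map genK).prod = 1) : l = [] := by
  by_contra hne
  rw [genK_eq, ← List.map_map, ← map_list_prod, toPGLZ_eq_one_iff] at h
  exact prod_genGL_notMem_pmOne hl hne h

lemma parity_of_mod2Hom_eq_one {A : GLZ} (h : mod2Hom A = 1) :
    Odd (A.val 0 0) ∧ Even (A.val 0 1) ∧ Even (A.val 1 0) ∧ Odd (A.val 1 1) := by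
  have entry (i j : Fin 2) : (A.val i j : ZMod 2) = (1 : Matrix (Fin 2) (Fin 2) (ZMod 2)) i j := by
    simpa [mod2Hom] using congrArg (fun M : GL (Fin 2) (ZMod 2) => M.val i j) h
  refine ⟨?_, ?_, ?_, ?_⟩
  · exact ZMod.intCast_eq_one_iff_odd.mp (entry 0 0)
  · exact ZMod.intCast_eq_zero_iff_even.mp (entry 0 1)
  · exact ZMod.intCast_eq_zero_iff_even.mp (entry 1 0)
  · exact ZMod.intCast_eq_one_iff_odd.mp (entry 1 1)

def genSubgroup : Subgroup GLZ := Subgroup.closure (insert (-1) (Set.range genGL))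

lemma neg_one_mem_genSubgroup : -1 ∈ genSubgroup :=
  Subgroup.subset_closure (Set.mem_insert _ _)

lemma genGL_mem_genSubgroup (i : Fin 3) : genGL i ∈ genSubgroup :=
  Subgroup.subset_closure (Set.mem_insert_of_mem _ ⟨i, rfl⟩)

open Matrix.GeneralLinearGroup in
lemma upperRightHom_two_mul_mem_genSubgroup (k : ℤ) :
    upperRightHom (2 * k) ∈ genSubgroup := by
  have h : upperRightHom (2 : ℤ) = genGL 0 * genGL 1 := by
    refine Units.ext ?_
    simp [genGL, mkInv, genMatrix]
  rw [mul_comm, ← smul_eq_mul, AddChar.map_zsmul_eq_zpow, h]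
  exact zpow_mem (mul_mem (genGL_mem_genSubgroup 0) (genGL_mem_genSubgroup 1)) k

open Matrix.GeneralLinearGroup in
lemma mem_genSubgroup_of_upper_triangular {A : GLZ} (hA : mod2Hom A = 1)
    (hc : A.val 1 0 = 0) : A ∈ genSubgroup := by
  obtain ⟨-, ⟨k, hb⟩, -, -⟩ := parity_of_mod2Hom_eq_one hA
  have hunit : IsUnit (A.val 0 0 * A.val 1 1) := by
    simpa [Matrix.det_fin_two, hc] using A.isUnit.map Matrix.detMonoidHom
  have hU := upperRightHom_two_mul_mem_genSubgroup
  have hg := genGL_mem_genSubgroup 0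
  have hneg := neg_one_mem_genSubgroup
  rcases Int.isUnit_iff.mp (isUnit_of_mul_isUnit_left hunit) with ha | ha <;>
  rcases Int.isUnit_iff.mp (isUnit_of_mul_isUnit_right hunit) with hd | hd
  · convert hU k
    refine Matrix.GeneralLinearGroup.ext fun i j => ?_
    fin_cases i <;> fin_cases j <;> simp [ha, hb, hc, hd, two_mul]
  · convert mul_mem (hU (-k)) hg
    refine Matrix.GeneralLinearGroup.ext fun i j => ?_
    fin_cases i <;> fin_cases j <;> simp [genGL, mkInv, genMatrix, ha, hb, hc, hd, two_mul]
  · convert mul_mem hneg (mul_mem (hU k) hg)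
    refine Matrix.GeneralLinearGroup.ext fun i j => ?_
    fin_cases i <;> fin_cases j <;> simp [genGL, mkInv, genMatrix, ha, hb, hc, hd, two_mul]
  · convert mul_mem hneg (hU (-k))
    refine Matrix.GeneralLinearGroup.ext fun i j => ?_
    fin_cases i <;> fin_cases j <;> simp [ha, hb, hc, hd, two_mul]

def firstColNorm (A : GLZ) : ℕ := (A.val 0 0).natAbs + (A.val 1 0).natAbs

/-- `g₁g₂`, `g₂g₁`, `g₃g₁`, `g₁g₃` add `±2` times one entry `(a, c)` of the first column to the
other; as `a` is odd and `c` even, `|a| ≠ |c|`, so one of these steps shrinks the larger entry. -/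
lemma exists_firstColNorm_genGL_mul_lt {A : GLZ} (ha : Odd (A.val 0 0))
    (hc : Even (A.val 1 0)) (hc0 : A.val 1 0 ≠ 0) :
    ∃ i j, firstColNorm (genGL i * genGL j * A) < firstColNorm A := by
  by_contra! h
  have h01 := h 0 1
  have h10 := h 1 0
  have h20 := h 2 0
  have h02 := h 0 2
  simp only [firstColNorm, Units.val_mul, genGL, mkInv, genMatrix, Matrix.mul_apply,
    Fin.sum_univ_two, Matrix.of_apply, Matrix.cons_val', Matrix.cons_val_zero, Matrix.cons_val_one,
    Matrix.cons_val_two, Matrix.head_cons, Matrix.empty_val', Matrix.cons_val_fin_one,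
    Matrix.tail_cons] at h01 h10 h20 h02
  rw [Int.odd_iff] at ha
  rw [Int.even_iff] at hc
  omega

lemma ker_mod2Hom_le_genSubgroup : mod2Hom.ker ≤ genSubgroup := by
  intro A hA
  induction hn : firstColNorm A using Nat.strong_induction_on generalizing A with
  | _ n ih =>
    obtain ⟨ha, -, hc, -⟩ := parity_of_mod2Hom_eq_one hA
    by_cases hc0 : A.val 1 0 = 0
    · exact mem_genSubgroup_of_upper_triangular hA hc0
    obtain ⟨i, j, hlt⟩ := exists_firstColNorm_genGL_mul_lt ha hc hc0
    have hB : genGL i * genGL j ∈ genSubgroup :=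
      mul_mem (genGL_mem_genSubgroup i) (genGL_mem_genSubgroup j)
    have hBA : genGL i * genGL j * A ∈ mod2Hom.ker := by
      simp [MonoidHom.mem_ker, mod2Hom_genGL, MonoidHom.mem_ker.mp hA]
    exact (Subgroup.mul_mem_cancel_left _ hB).mp (ih _ (hn ▸ hlt) hBA rfl)

lemma genK_mem_Kcongr (i : Fin 3) : genK i ∈ Kcongr := by
  rw [genK_eq, Function.comp_apply]
  exact mod2Hom_genGL i

lemma genK_mul_self (i : Fin 3) : genK i * genK i = 1 := by
  rw [genK_eq, Function.comp_apply, ← map_mul, genGL_mul_self, map_one]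

lemma genK_ne_one (i : Fin 3) : genK i ≠ 1 := fun h =>
  List.cons_ne_nil i [] (eq_nil_of_prod_genK_eq_one (List.isChain_singleton i) (by simpa using h))

lemma closure_genK_eq_Kcongr : Subgroup.closure {genK 0, genK 1, genK 2} = Kcongr := by
  refine le_antisymm ((Subgroup.closure_le _).mpr ?_) fun x hx => ?_
  · rintro _ (rfl | rfl | rfl) <;> exact genK_mem_Kcongr _
  obtain ⟨A, rfl⟩ := QuotientGroup.mk'_surjective pmOne x
  have hgen : genSubgroup ≤ (Subgroup.closure {genK 0, genK 1, genK 2}).comap toPGLZ := by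
    refine (Subgroup.closure_le _).mpr ?_
    rintro _ (rfl | ⟨i, rfl⟩)
    · rw [SetLike.mem_coe, Subgroup.mem_comap, toPGLZ_eq_one_iff.mpr (Subgroup.mem_zpowers _)]
      exact one_mem _
    · rw [SetLike.mem_coe, Subgroup.mem_comap, ← Function.comp_apply (f := toPGLZ), ← genK_eq]
      exact Subgroup.subset_closure (by fin_cases i <;> simp)
  exact hgen (ker_mod2Hom_le_genSubgroup hx)

/-- The subgroup `K ⊂ PGL(2, ℤ)` of classes of matrices congruent to
the identity mod 2 is freely generated by the three involutions `g₁, g₂, g₃`; i.e.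
`K ≅ ℤ/2 * ℤ/2 * ℤ/2` with these generators: the `gᵢ` are nontrivial involutions
lying in `K`, they generate `K`, and no alternating (reduced) nonempty word in them
is trivial. -/
theorem K_free_product_of_three_involutions :
    (∀ i : Fin 3, genK i ∈ Kcongr ∧ genK i * genK i = 1 ∧ genK i ≠ 1) ∧
    Subgroup.closure {genK 0, genK 1, genK 2} = Kcongr ∧
    (∀ l : List (Fin 3), l.Chain' (· ≠ ·) → (l.map genK).prod = 1 → l = []) :=
  ⟨fun i => ⟨genK_mem_Kcongr i, genK_mul_self i, genK_ne_one i⟩, closure_genK_eq_Kcongr,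
    fun _ => eq_nil_of_prod_genK_eq_one⟩
end

section
/- Let C_s = {X_1 X_2 X_3 - X_1^2 - X_2^2 - X_3^2 + p_1 X_1 + p_2 X_2 + p_3 X_3 + p_0 + 4 = 0} with p_i = ε_i s for i=1,2,3 (ε_i ∈ {±1}, ε_1 ε_2 ε_3 = 1) and p_0 = s(2 - s/2). Then for s = 0 the surface C_0 has exactly four singular points, namely 2(ε'_1, ε'_2, ε'_3) with ε'_i ∈ {±1} and ε'_1 ε'_2 ε'_3 = 1. -/
/-!
Combining the cubic equation with the partial derivatives cancels the cubic term and leaves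
`2 (xᵢ² - 4) = 0`, so every coordinate of a singular point is `±2`; a second combination gives
`x₁ x₂ x₃ = 8`, which selects the sign patterns with product `1`.
-/

section

variable {R : Type*} [CommRing R] [NoZeroDivisors R]

lemma eq_two_or_eq_neg_two_of_sq_eq_four {x : R} (hx : x ^ 2 = 4) :
    x = 2 ∨ x = -2 :=
  sq_eq_sq_iff_eq_or_eq_neg.mp (by linear_combination hx)

lemma neg_eight_ne_eight (h2 : (2 : R) ≠ 0) : (-8 : R) ≠ 8 := by
  intro h
  have h16 : (2 : R) ^ 4 = 0 := by linear_combination -h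
  exact h2 (pow_eq_zero_iff (by norm_num) |>.mp h16)

end

namespace CayleyCubic

variable {R : Type*} [CommRing R]

lemma sq_eq_four_of_singular [NoZeroDivisors R] (h2 : (2 : R) ≠ 0) {x₁ x₂ x₃ : R}
    (h : x₁ * x₂ * x₃ - x₁ ^ 2 - x₂ ^ 2 - x₃ ^ 2 + 4 = 0)
    (h₂ : x₁ * x₃ - 2 * x₂ = 0) (h₃ : x₁ * x₂ - 2 * x₃ = 0) :
    x₁ ^ 2 = 4 := by
  have h' : 2 * (x₁ ^ 2 - 4) = 0 := by linear_combination -2 * h + x₂ * h₂ + x₃ * h₃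
  exact sub_eq_zero.mp ((mul_eq_zero.mp h').resolve_left h2)

lemma mul_mul_eq_eight_of_singular {x₁ x₂ x₃ : R}
    (h : x₁ * x₂ * x₃ - x₁ ^ 2 - x₂ ^ 2 - x₃ ^ 2 + 4 = 0) (h₁ : x₂ * x₃ - 2 * x₁ = 0)
    (h₂ : x₁ * x₃ - 2 * x₂ = 0) (h₃ : x₁ * x₂ - 2 * x₃ = 0) :
    x₁ * x₂ * x₃ = 8 := by
  linear_combination -2 * h + x₁ * h₁ + x₂ * h₂ + x₃ * h₃

theorem singular_iff [NoZeroDivisors R] (h2 : (2 : R) ≠ 0) (x₁ x₂ x₃ : R) :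
    (x₁ * x₂ * x₃ - x₁ ^ 2 - x₂ ^ 2 - x₃ ^ 2 + 4 = 0 ∧
      x₂ * x₃ - 2 * x₁ = 0 ∧ x₁ * x₃ - 2 * x₂ = 0 ∧ x₁ * x₂ - 2 * x₃ = 0) ↔
    ((x₁, x₂, x₃) = (2, 2, 2) ∨ (x₁, x₂, x₃) = (2, -2, -2) ∨
      (x₁, x₂, x₃) = (-2, 2, -2) ∨ (x₁, x₂, x₃) = (-2, -2, 2)) := by
  constructor
  · rintro ⟨h, h₁, h₂, h₃⟩
    have hx₁ := eq_two_or_eq_neg_two_of_sq_eq_four (sq_eq_four_of_singular h2 h h₂ h₃)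
    have hx₂ := eq_two_or_eq_neg_two_of_sq_eq_four
      (sq_eq_four_of_singular h2 (x₁ := x₂) (x₂ := x₁) (x₃ := x₃) (by linear_combination h) h₁
        (by linear_combination h₃))
    have hx₃ := eq_two_or_eq_neg_two_of_sq_eq_four
      (sq_eq_four_of_singular h2 (x₁ := x₃) (x₂ := x₁) (x₃ := x₂) (by linear_combination h)
        (by linear_combination h₁) (by linear_combination h₂))
    have hprod := mul_mul_eq_eight_of_singular h h₁ h₂ h₃
    have hsign := neg_eight_ne_eight h2
    rcases hx₁ with rfl | rfl <;> rcases hx₂ with rfl | rfl <;> rcases hx₃ with rfl | rfl <;>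
      first
      | exact (hsign (by linear_combination hprod)).elim
      | simp
  · rintro (h | h | h | h) <;> simp only [Prod.mk.injEq] at h <;> obtain ⟨rfl, rfl, rfl⟩ := h <;>
      refine ⟨?_, ?_, ?_, ?_⟩ <;> ring

end CayleyCubic

/-- In the family `C_s` with `p_i = ε_i s` (`ε₁ε₂ε₃ = 1`) and
`p₀ = s(2 - s/2)`, at `s = 0` the surface `X₁X₂X₃ = X₁² + X₂² + X₃² - 4` has exactly
four singular points, namely `2(ε'₁, ε'₂, ε'₃)` with `ε'ᵢ = ±1`, `ε'₁ε'₂ε'₃ = 1`. -/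
theorem singular_points_of_degenerate_cubic (x₁ x₂ x₃ : ℂ) :
    (x₁ * x₂ * x₃ - x₁ ^ 2 - x₂ ^ 2 - x₃ ^ 2 + 4 = 0 ∧
      x₂ * x₃ - 2 * x₁ = 0 ∧ x₁ * x₃ - 2 * x₂ = 0 ∧ x₁ * x₂ - 2 * x₃ = 0) ↔
    ((x₁, x₂, x₃) = (2, 2, 2) ∨ (x₁, x₂, x₃) = (2, -2, -2) ∨
      (x₁, x₂, x₃) = (-2, 2, -2) ∨ (x₁, x₂, x₃) = (-2, -2, 2)) :=
  CayleyCubic.singular_iff two_ne_zero x₁ x₂ x₃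
end
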